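/- arXiv:1208.4326 — 2 statements merged into one kernel-verified Lean document; each statement's English description precedes it below -/
import Mathlib

section
/- Let ℓ and r be integers with 2 ≤ r ≤ ⌊ℓ/2⌋ − 1. Then β_{r−1,ℓ−2} + β_{r,ℓ} − β_{r,ℓ−1} = 0. -/
/-- Binomial coefficient C(n, j) for integers, taken to be 0 when j < 0 or j > n. -/
def Cb (n j : ℤ) : ℤ := if 0 ≤ j ∧ j ≤ n then (n.toNat).choose j.toNat else 0

/-- The sequence B_{r,ℓ}(m): B_{1,ℓ}(m) = C(ℓ,m) − 1 and, for r ≥ 2,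
    B_{r,ℓ}(m) = B_{r−1,ℓ}(m) − C(ℓ−2(r−1), m−(r−1))·B_{r−1,ℓ}(r−1). -/
def Bseq (ℓ : ℕ) : ℕ → ℤ → ℤ
  | 0, m => Cb (ℓ : ℤ) m - 1
  | 1, m => Cb (ℓ : ℤ) m - 1
  | (r + 2), m =>
      Bseq ℓ (r + 1) m
        - Cb ((ℓ : ℤ) - 2 * (r + 1)) (m - (r + 1)) * Bseq ℓ (r + 1) ((r : ℤ) + 1)

/-- β_{r,ℓ} = B_{r,ℓ}(r). -/
def betaSeq (ℓ r : ℕ) : ℤ := Bseq ℓ r r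

/-!
Unrolling the recursion gives, for `r ≤ ℓ`,
`B_{r+1,ℓ}(m) = ∑_{j ≤ r} (-1)^j C(ℓ-j, j) C(ℓ-2j, m-j) - 1`.
Since `C(ℓ-j, j) C(ℓ-2j, r-j) = C(r, j) C(ℓ-j, r)`, the diagonal sum `∑_{j ≤ r}` is the `r`-th
finite difference of `x ↦ C(x, r)`, which is `1`. Hence `β_{r,ℓ} = (-1)^(r+1) C(ℓ-r, r)` for
`1 ≤ r ≤ ℓ`, and the identity becomes Pascal's rule.
-/

open Finset

theorem sum_range_neg_one_pow_mul_choose_mul_choose {R l : ℕ} (h : R ≤ l) :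
    ∑ j ∈ range (R + 1), (-1 : ℤ) ^ j * R.choose j * (l - j).choose R = 1 := by
  have hΔ := congr_fun (fwdDiff_iter_choose 0 R) (l - R)
  rw [fwdDiff_iter_eq_sum_shift, ← sum_range_reflect] at hΔ
  simp only [Nat.choose_zero_right, Nat.cast_one, smul_eq_mul, mul_one, add_zero,
    Nat.add_sub_cancel] at hΔ
  refine Eq.trans (sum_congr rfl fun j hj => ?_) hΔ
  have hj : j ≤ R := Nat.lt_succ_iff.mp (mem_range.mp hj)
  rw [Nat.sub_sub_self hj, Nat.choose_symm hj, show l - R + (R - j) = l - j by omega]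

theorem Cb_natCast (n k : ℕ) : Cb n k = n.choose k := by
  rcases le_or_gt k n with hk | hk
  · simp [Cb, hk]
  · simp [Cb, Nat.choose_eq_zero_of_lt hk]

theorem Cb_of_neg {n : ℤ} (hn : n < 0) (j : ℤ) : Cb n j = 0 :=
  if_neg fun h => by omega

theorem choose_mul_Cb_sub {l R j : ℕ} (hj : j ≤ R) :
    ((l - j).choose j : ℤ) * Cb (l - 2 * j) (R - j) = R.choose j * (l - j).choose R := by
  rcases le_or_gt (2 * j) l with hl | hl
  · have hCb : Cb (l - 2 * j) (R - j) = (l - 2 * j).choose (R - j) := by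
      rw [← Cb_natCast]; push_cast [hl, hj]; rfl
    rw [hCb, mul_comm (R.choose j : ℤ), ← Nat.cast_mul, ← Nat.cast_mul, Nat.choose_mul hj,
      show l - j - j = l - 2 * j by omega]
  · rw [Cb_of_neg (by omega), Nat.choose_eq_zero_of_lt (by omega : l - j < R)]
    simp

theorem sum_range_neg_one_pow_mul_choose_mul_Cb {l R : ℕ} (h : R ≤ l) :
    ∑ j ∈ range R, (-1 : ℤ) ^ j * (l - j).choose j * Cb (l - 2 * j) (R - j)
      = 1 - (-1) ^ R * (l - R).choose R := by
  have hsum := sum_range_neg_one_pow_mul_choose_mul_choose h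
  rw [sum_range_succ, Nat.choose_self] at hsum
  rw [sum_congr rfl fun j hj => by
    rw [mul_assoc, choose_mul_Cb_sub (mem_range.mp hj).le, ← mul_assoc]]
  linear_combination hsum

theorem Bseq_succ_eq_sum {l r : ℕ} (h : r ≤ l) (m : ℤ) :
    Bseq l (r + 1) m
      = ∑ j ∈ range (r + 1), (-1 : ℤ) ^ j * (l - j).choose j * Cb (l - 2 * j) (m - j) - 1 := by
  induction r generalizing m with
  | zero => simp [Bseq]
  | succ r ih =>
    have hdiag : Bseq l (r + 1) (r + 1) = -(-1) ^ (r + 1) * (l - (r + 1)).choose (r + 1) := by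
      rw [ih (by omega), ← Nat.cast_succ, sum_range_neg_one_pow_mul_choose_mul_Cb h]
      ring
    rw [Bseq, hdiag, ih (by omega), sum_range_succ _ (r + 1)]
    push_cast
    ring

theorem betaSeq_eq {l r : ℕ} (h : r ≤ l) (hr : 1 ≤ r) :
    betaSeq l r = (-1) ^ (r + 1) * (l - r).choose r := by
  obtain ⟨r, rfl⟩ := Nat.exists_eq_add_of_le' hr
  rw [betaSeq, Bseq_succ_eq_sum (by omega), sum_range_neg_one_pow_mul_choose_mul_Cb h]
  ring

/-- for integers 2 ≤ r ≤ ⌊ℓ/2⌋ − 1,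
    β_{r−1,ℓ−2} + β_{r,ℓ} − β_{r,ℓ−1} = 0. -/
theorem beta_combinatorial_identity (ℓ r : ℕ) (hr : 2 ≤ r) (hrl : r ≤ ℓ / 2 - 1) :
    betaSeq (ℓ - 2) (r - 1) + betaSeq ℓ r - betaSeq (ℓ - 1) r = 0 := by
  obtain ⟨s, rfl⟩ := Nat.exists_eq_add_of_le' (by omega : 1 ≤ r)
  have hpascal : (ℓ - (s + 1)).choose (s + 1)
      = (ℓ - 2 - s).choose s + (ℓ - 1 - (s + 1)).choose (s + 1) := by
    rw [show ℓ - (s + 1) = ℓ - 2 - s + 1 by omega, Nat.choose_succ_succ,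
      show ℓ - 1 - (s + 1) = ℓ - 2 - s by omega]
  rw [Nat.add_sub_cancel, betaSeq_eq (by omega) (by omega), betaSeq_eq (by omega) (by omega),
    betaSeq_eq (by omega) (by omega), hpascal]
  push_cast
  ring
end

section
/- Let k ≥ 3 be an odd integer, λ = (k−1)/2, N a positive integer with 4 ∣ N, and χ a Dirichlet character modulo N with values in ℂ. Let p be a prime not dividing N and t a squarefree positive integer. Define operators V_ℓ on sequences a : ℕ → ℂ by V_0 = id, V_1 = U_p, V_2 = U_p∘U_p − χ(p)²·(p^{k−3} + p^{k−2})·id, and V_{ℓ+1} = U_p∘V_ℓ − χ(p)²·p^{k−2}·V_{ℓ−1} for ℓ ≥ 2; and define operators W_{p,ℓ} by W_{p,0} = id, W_{p,1} = W_p, and W_{p,ℓ+1} = W_p∘W_{p,ℓ} − χ(p)²·p^{k−2}·W_{p,ℓ−1} for ℓ ≥ 1. Then for every integer ℓ ≥ 2, every a : ℕ → ℂ, and every positive integer n, (Sh_t(V_ℓ a))(n) = (W_{p,ℓ}(Sh_t a))(n) − χ(p)²·p^{k−3}·(W_{p,ℓ−2}(Sh_t a))(n). -/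
open Finset

/-- ψ_t(m) = χ(m)·((−1)^λ t ∣ m) (Jacobi symbol) for odd m, 0 for even m,
    where λ = (k−1)/2. -/
noncomputable def psi (k N : ℕ) (χ : DirichletCharacter ℂ N) (t : ℕ) (m : ℕ) : ℂ :=
  if Odd m then
    χ (m : ZMod N) * ((jacobiSym ((-1) ^ ((k - 1) / 2) * (t : ℤ)) m : ℤ) : ℂ)
  else 0

/-- The Shimura-lift coefficient map:
    (Sh_t a)(n) = ∑_{d ∣ n} ψ_t(d)·d^{λ−1}·a(t·(n/d)²). -/
noncomputable def ShLift (k N : ℕ) (χ : DirichletCharacter ℂ N) (t : ℕ) (a : ℕ → ℂ)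
    (n : ℕ) : ℂ :=
  ∑ d ∈ n.divisors, psi k N χ t d * (d : ℂ) ^ ((k - 1) / 2 - 1) * a (t * (n / d) ^ 2)

/-- The half-integral weight Hecke coefficient operator U_p (Shimura's formula for T_{p²}). -/
noncomputable def Uop (k N : ℕ) (χ : DirichletCharacter ℂ N) (p : ℕ) [Fact p.Prime]
    (a : ℕ → ℂ) (n : ℕ) : ℂ :=
  a (p ^ 2 * n)
    + χ (p : ZMod N) * ((legendreSym p ((-1) ^ ((k - 1) / 2) * (n : ℤ)) : ℤ) : ℂ)
        * (p : ℂ) ^ ((k - 1) / 2 - 1) * a n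
    + χ (p : ZMod N) ^ 2 * (p : ℂ) ^ (k - 2) * (if p ^ 2 ∣ n then a (n / p ^ 2) else 0)

/-- The integral weight Hecke coefficient operator W_p:
    (W_p A)(n) = A(pn) + χ(p)²·p^{k−2}·[A(n/p) if p ∣ n else 0]. -/
noncomputable def Wop (k N : ℕ) (χ : DirichletCharacter ℂ N) (p : ℕ) (A : ℕ → ℂ)
    (n : ℕ) : ℂ :=
  A (p * n) + χ (p : ZMod N) ^ 2 * (p : ℂ) ^ (k - 2) * (if p ∣ n then A (n / p) else 0)

/-- The operators V_ℓ (coefficient versions of T_{p^{2ℓ}}):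
    V_0 = id, V_1 = U_p, V_2 = U_p∘U_p − χ(p)²·(p^{k−3}+p^{k−2})·id,
    V_{ℓ+1} = U_p∘V_ℓ − χ(p)²·p^{k−2}·V_{ℓ−1} for ℓ ≥ 2. -/
noncomputable def Vop (k N : ℕ) (χ : DirichletCharacter ℂ N) (p : ℕ) [Fact p.Prime] :
    ℕ → (ℕ → ℂ) → ℕ → ℂ
  | 0 => fun a => a
  | 1 => Uop k N χ p
  | 2 => fun a n =>
      Uop k N χ p (Uop k N χ p a) n
        - χ (p : ZMod N) ^ 2 * ((p : ℂ) ^ (k - 3) + (p : ℂ) ^ (k - 2)) * a n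
  | (ℓ + 3) => fun a n =>
      Uop k N χ p (Vop k N χ p (ℓ + 2) a) n
        - χ (p : ZMod N) ^ 2 * (p : ℂ) ^ (k - 2) * Vop k N χ p (ℓ + 1) a n

/-- The operators W_{p,ℓ} (coefficient versions of T_{p^ℓ}):
    W_{p,0} = id, W_{p,1} = W_p,
    W_{p,ℓ+1} = W_p∘W_{p,ℓ} − χ(p)²·p^{k−2}·W_{p,ℓ−1} for ℓ ≥ 1. -/
noncomputable def Wlop (k N : ℕ) (χ : DirichletCharacter ℂ N) (p : ℕ) :
    ℕ → (ℕ → ℂ) → ℕ → ℂ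
  | 0 => fun A => A
  | 1 => Wop k N χ p
  | (ℓ + 2) => fun A n =>
      Wop k N χ p (Wlop k N χ p (ℓ + 1) A) n
        - χ (p : ZMod N) ^ 2 * (p : ℂ) ^ (k - 2) * Wlop k N χ p ℓ A n

/-!
The heart of the matter is the coefficient identity `Sh_t ∘ U_p = W_p ∘ Sh_t` for odd `p`.
Write `n = p^e m` with `p ∤ m`. Since `ψ_t` is multiplicative, `Sh_t g (p^e m)` is the
convolution `∑_{i+j=e} u^i b_j` of the powers of `u = ψ_t(p) p^{λ-1}` with
`b_j = Sh_t (g (p^{2j} ·)) m`. Replacing `g` by `U_p a` turns `b_{j+1}` into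
`b_{j+2} + χ(p)² p^{k-2} b_j` and `b_0` into `b_1 + u b_0`: the arguments `t w²` with `p ∤ w` are
not divisible by `p²` because `t` is squarefree, and their Legendre symbol `((-1)^λ t w² | p)` is
the one in `ψ_t(p)`. On the convolution this is exactly `W_p`. The three-term recurrences of
`V_ℓ` and `W_{p,ℓ}` then match by linearity; the only discrepancy is the extra `χ(p)² p^{k-3}`
in `V_2`, which propagates as the `W_{p,ℓ-2}` correction.
-/

theorem Nat.Coprime.sum_divisors_mul_eq_sum_sum {M : Type*} [AddCommMonoid M] {m n : ℕ}
    (hmn : m.Coprime n) (f : ℕ → M) :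
    ∑ d ∈ (m * n).divisors, f d = ∑ d₁ ∈ m.divisors, ∑ d₂ ∈ n.divisors, f (d₁ * d₂) := by
  rw [hmn.divisors_mul, sum_map, ← sum_product', ← sum_attach (m.divisors ×ˢ n.divisors)]
  rfl

theorem Finset.Nat.sum_antidiagonal_pow_mul_of_recurrence {R : Type*} [CommSemiring R]
    (u c : R) (b B : ℕ → R) (hB₀ : B 0 = b 1 + u * b 0)
    (hB : ∀ j, B (j + 1) = b (j + 2) + c * b j) (e : ℕ) :
    ∑ x ∈ antidiagonal (e + 1), u ^ x.1 * B x.2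
      = ∑ x ∈ antidiagonal (e + 2), u ^ x.1 * b x.2
        + c * ∑ x ∈ antidiagonal e, u ^ x.1 * b x.2 := by
  have hc : ∑ x ∈ antidiagonal e, u ^ x.1 * (c * b x.2)
      = c * ∑ x ∈ antidiagonal e, u ^ x.1 * b x.2 := by
    rw [mul_sum]
    exact sum_congr rfl fun _ _ => mul_left_comm _ _ _
  simp only [Nat.sum_antidiagonal_succ' (n := e + 1), Nat.sum_antidiagonal_succ' (n := e), hB₀,
    hB, mul_add, sum_add_distrib, hc, zero_add, add_assoc, Nat.reduceAdd]
  ring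

theorem Squarefree.not_sq_dvd_mul_sq {t p w : ℕ} (ht : Squarefree t) (hp : p.Prime)
    (hpw : ¬ p ∣ w) : ¬ p ^ 2 ∣ t * w ^ 2 := by
  intro h
  have hcop : (p ^ 2).Coprime (w ^ 2) := ((Nat.Prime.coprime_iff_not_dvd hp).2 hpw).pow 2 2
  have hpt : p * p ∣ t := by rw [← sq]; exact hcop.dvd_of_dvd_mul_right h
  exact hp.not_isUnit (ht p hpt)

section ShimuraLift

variable {k N : ℕ} {χ : DirichletCharacter ℂ N} {t : ℕ}

theorem psi_one : psi k N χ t 1 = 1 := by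
  simp [psi]

theorem psi_mul (x y : ℕ) : psi k N χ t (x * y) = psi k N χ t x * psi k N χ t y := by
  unfold psi
  by_cases hxy : Odd (x * y)
  · obtain ⟨hx, hy⟩ := Nat.odd_mul.mp hxy
    rw [if_pos hxy, if_pos hx, if_pos hy, jacobiSym.mul_right' _ hx.pos.ne' hy.pos.ne']
    push_cast
    rw [map_mul]
    ring
  · rw [if_neg hxy]
    rcases not_and_or.mp (mt Nat.odd_mul.mpr hxy) with h | h <;> simp [h]

theorem psi_pow (x i : ℕ) : psi k N χ t (x ^ i) = psi k N χ t x ^ i := by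
  induction i with
  | zero => rw [pow_zero, pow_zero, psi_one]
  | succ i ih => rw [pow_succ, pow_succ, psi_mul, ih]

theorem shLift_pow_mul {p : ℕ} (hp : p.Prime) {m : ℕ} (hpm : ¬ p ∣ m) (g : ℕ → ℂ) (e : ℕ) :
    ShLift k N χ t g (p ^ e * m)
      = ∑ x ∈ antidiagonal e, (psi k N χ t p * (p : ℂ) ^ ((k - 1) / 2 - 1)) ^ x.1
          * ShLift k N χ t (fun y => g (p ^ (2 * x.2) * y)) m := by
  have hcop : (p ^ e).Coprime m := ((Nat.Prime.coprime_iff_not_dvd hp).2 hpm).pow_left e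
  set F : ℕ → ℂ := fun d => psi k N χ t d * (d : ℂ) ^ ((k - 1) / 2 - 1)
    * g (t * (p ^ e * m / d) ^ 2)
  calc ShLift k N χ t g (p ^ e * m)
      = ∑ i ∈ range (e + 1), ∑ δ ∈ m.divisors, F (p ^ i * δ) := by
        rw [ShLift, hcop.sum_divisors_mul_eq_sum_sum, Nat.sum_divisors_prime_pow hp]
    _ = ∑ x ∈ antidiagonal e, ∑ δ ∈ m.divisors, F (p ^ x.1 * δ) :=
        (Nat.sum_antidiagonal_eq_sum_range_succ_mk
          (fun x => ∑ δ ∈ m.divisors, F (p ^ x.1 * δ)) e).symm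
    _ = _ := by
      refine sum_congr rfl fun ⟨i, j⟩ hij => ?_
      rw [HasAntidiagonal.mem_antidiagonal] at hij
      subst hij
      rw [ShLift, mul_sum]
      refine sum_congr rfl fun δ hδ => ?_
      have hquot : p ^ (i + j) * m / (p ^ i * δ) = p ^ j * (m / δ) := by
        rw [pow_add, mul_assoc, Nat.mul_div_mul_left _ _ (pow_pos hp.pos i),
          Nat.mul_div_assoc _ (Nat.dvd_of_mem_divisors hδ)]
      have harg : t * (p ^ j * (m / δ)) ^ 2 = p ^ (2 * j) * (t * (m / δ) ^ 2) := by ring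
      simp only [F, hquot, harg, psi_mul, psi_pow]
      push_cast
      ring

theorem shLift_sub_smul (F G : ℕ → ℂ) (c : ℂ) :
    ShLift k N χ t (F - c • G) = ShLift k N χ t F - c • ShLift k N χ t G := by
  funext n
  simp only [ShLift, Pi.sub_apply, Pi.smul_apply, smul_eq_mul, mul_sum, ← sum_sub_distrib]
  exact sum_congr rfl fun _ _ => by ring

theorem wop_sub_smul {p : ℕ} (F G : ℕ → ℂ) (c : ℂ) :
    Wop k N χ p (F - c • G) = Wop k N χ p F - c • Wop k N χ p G := by
  funext n
  simp only [Wop, Pi.sub_apply, Pi.smul_apply, smul_eq_mul]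
  split_ifs <;> ring

theorem wlop_zero {p : ℕ} (A : ℕ → ℂ) : Wlop k N χ p 0 A = A :=
  rfl

theorem wlop_one {p : ℕ} (A : ℕ → ℂ) : Wlop k N χ p 1 A = Wop k N χ p A :=
  rfl

theorem wlop_add_two {p : ℕ} (ℓ : ℕ) (A : ℕ → ℂ) :
    Wlop k N χ p (ℓ + 2) A = Wop k N χ p (Wlop k N χ p (ℓ + 1) A)
      - (χ (p : ZMod N) ^ 2 * (p : ℂ) ^ (k - 2)) • Wlop k N χ p ℓ A :=
  rfl

variable {p : ℕ} [Fact p.Prime]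

theorem psi_prime (hp2 : p ≠ 2) :
    psi k N χ t p = χ p * legendreSym p ((-1) ^ ((k - 1) / 2) * t) := by
  rw [psi, if_pos ((Fact.out : p.Prime).odd_of_ne_two hp2), jacobiSym.legendreSym.to_jacobiSym]

theorem uop_apply_sq_mul (a : ℕ → ℂ) (y : ℕ) :
    Uop k N χ p a (p ^ 2 * y)
      = a (p ^ 2 * (p ^ 2 * y)) + χ p ^ 2 * (p : ℂ) ^ (k - 2) * a y := by
  have hp : p.Prime := Fact.out
  have hleg : legendreSym p ((-1) ^ ((k - 1) / 2) * ((p ^ 2 * y : ℕ) : ℤ)) = 0 := by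
    rw [legendreSym.eq_zero_iff]
    push_cast
    simp
  rw [Uop, hleg, if_pos (dvd_mul_right _ _), Nat.mul_div_cancel_left _ (pow_pos hp.pos 2)]
  push_cast
  ring

theorem uop_apply_squarefree_mul_sq (hp2 : p ≠ 2) (ht : Squarefree t) (a : ℕ → ℂ) {w : ℕ}
    (hpw : ¬ p ∣ w) :
    Uop k N χ p a (t * w ^ 2)
      = a (p ^ 2 * (t * w ^ 2))
        + psi k N χ t p * (p : ℂ) ^ ((k - 1) / 2 - 1) * a (t * w ^ 2) := by
  have hp : p.Prime := Fact.out
  have hw : ((w : ℤ) : ZMod p) ≠ 0 := by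
    rw [Int.cast_natCast, Ne, ZMod.natCast_eq_zero_iff]
    exact hpw
  have hleg : legendreSym p ((-1) ^ ((k - 1) / 2) * ((t * w ^ 2 : ℕ) : ℤ))
      = legendreSym p ((-1) ^ ((k - 1) / 2) * t) := by
    rw [Nat.cast_mul, Nat.cast_pow, ← mul_assoc, legendreSym.mul, legendreSym.sq_one' (p := p) hw,
      mul_one]
  rw [Uop, if_neg (ht.not_sq_dvd_mul_sq hp hpw), hleg, psi_prime hp2]
  ring

theorem shLift_uop_of_not_dvd (hp2 : p ≠ 2) (ht : Squarefree t) (a : ℕ → ℂ) {m : ℕ}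
    (hpm : ¬ p ∣ m) :
    ShLift k N χ t (Uop k N χ p a) m
      = ShLift k N χ t (fun y => a (p ^ 2 * y)) m
        + psi k N χ t p * (p : ℂ) ^ ((k - 1) / 2 - 1) * ShLift k N χ t a m := by
  simp only [ShLift, mul_sum, ← sum_add_distrib]
  refine sum_congr rfl fun δ hδ => ?_
  have hpδ : ¬ p ∣ m / δ :=
    fun h => hpm (h.trans (Nat.div_dvd_of_dvd (Nat.dvd_of_mem_divisors hδ)))
  rw [uop_apply_squarefree_mul_sq hp2 ht a hpδ]
  ring

theorem shLift_uop_pow_mul (a : ℕ → ℂ) (j m : ℕ) :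
    ShLift k N χ t (fun y => Uop k N χ p a (p ^ (2 * (j + 1)) * y)) m
      = ShLift k N χ t (fun y => a (p ^ (2 * (j + 2)) * y)) m
        + χ (p : ZMod N) ^ 2 * (p : ℂ) ^ (k - 2)
          * ShLift k N χ t (fun y => a (p ^ (2 * j) * y)) m := by
  simp only [ShLift, mul_sum, ← sum_add_distrib]
  refine sum_congr rfl fun δ _ => ?_
  have h₁ (y : ℕ) : p ^ (2 * (j + 1)) * y = p ^ 2 * (p ^ (2 * j) * y) := by ring
  have h₂ (y : ℕ) : p ^ (2 * (j + 2)) * y = p ^ 2 * (p ^ 2 * (p ^ (2 * j) * y)) := by ring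
  rw [h₁, h₂, uop_apply_sq_mul]
  ring

theorem shLift_uop (hp2 : p ≠ 2) (ht : Squarefree t) (a : ℕ → ℂ) :
    ShLift k N χ t (Uop k N χ p a) = Wop k N χ p (ShLift k N χ t a) := by
  have hp : p.Prime := Fact.out
  funext n
  rcases eq_or_ne n 0 with rfl | hn
  · simp [ShLift, Wop]
  obtain ⟨e, m, hpm, rfl⟩ := Nat.exists_eq_pow_mul_and_not_dvd hn p hp.ne_one
  set u := psi k N χ t p * (p : ℂ) ^ ((k - 1) / 2 - 1)
  set c := χ (p : ZMod N) ^ 2 * (p : ℂ) ^ (k - 2)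
  set b := fun j => ShLift k N χ t (fun y => a (p ^ (2 * j) * y)) m
  set B := fun j => ShLift k N χ t (fun y => Uop k N χ p a (p ^ (2 * j) * y)) m
  have hB₀ : B 0 = b 1 + u * b 0 := by
    simpa [B, b] using shLift_uop_of_not_dvd hp2 ht a hpm
  have hB : ∀ j, B (j + 1) = b (j + 2) + c * b j := fun j => shLift_uop_pow_mul a j m
  rw [Wop, show p * (p ^ e * m) = p ^ (e + 1) * m by ring, shLift_pow_mul hp hpm,
    shLift_pow_mul hp hpm]
  cases e with
  | zero =>
    rw [pow_zero, one_mul, if_neg hpm, mul_zero, add_zero, Nat.sum_antidiagonal_succ,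
      Nat.antidiagonal_zero, sum_singleton, sum_singleton]
    simp only [B, b] at hB₀
    rw [hB₀]
    ring
  | succ e =>
    have hquot : p ^ (e + 1) * m / p = p ^ e * m := by
      rw [pow_succ', mul_assoc, Nat.mul_div_cancel_left _ hp.pos]
    rw [if_pos (dvd_mul_of_dvd_left (dvd_pow_self p e.succ_ne_zero) m), hquot,
      shLift_pow_mul hp hpm]
    exact Nat.sum_antidiagonal_pow_mul_of_recurrence u c b B hB₀ hB e

theorem vop_one (a : ℕ → ℂ) : Vop k N χ p 1 a = Uop k N χ p a :=
  rfl

theorem vop_two (a : ℕ → ℂ) :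
    Vop k N χ p 2 a = Uop k N χ p (Uop k N χ p a)
      - (χ (p : ZMod N) ^ 2 * ((p : ℂ) ^ (k - 3) + (p : ℂ) ^ (k - 2))) • a :=
  rfl

theorem vop_add_three (ℓ : ℕ) (a : ℕ → ℂ) :
    Vop k N χ p (ℓ + 3) a = Uop k N χ p (Vop k N χ p (ℓ + 2) a)
      - (χ (p : ZMod N) ^ 2 * (p : ℂ) ^ (k - 2)) • Vop k N χ p (ℓ + 1) a :=
  rfl

theorem shLift_vop_add_two (hp2 : p ≠ 2) (ht : Squarefree t) (a : ℕ → ℂ) :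
    ∀ ℓ, ShLift k N χ t (Vop k N χ p (ℓ + 2) a)
      = Wlop k N χ p (ℓ + 2) (ShLift k N χ t a)
        - (χ (p : ZMod N) ^ 2 * (p : ℂ) ^ (k - 3)) • Wlop k N χ p ℓ (ShLift k N χ t a)
  | 0 => by
    rw [vop_two, shLift_sub_smul, shLift_uop hp2 ht, shLift_uop hp2 ht, wlop_add_two, zero_add,
      wlop_one, wlop_zero]
    module
  | 1 => by
    rw [vop_add_three, shLift_sub_smul, shLift_uop hp2 ht, shLift_vop_add_two hp2 ht a 0,
      wop_sub_smul, wlop_add_two 1, wlop_add_two 0, zero_add, wlop_one, wlop_zero, vop_one,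
      shLift_uop hp2 ht]
    module
  | ℓ + 2 => by
    rw [vop_add_three, shLift_sub_smul, shLift_uop hp2 ht, shLift_vop_add_two hp2 ht a (ℓ + 1),
      wop_sub_smul, shLift_vop_add_two hp2 ht a ℓ, wlop_add_two (ℓ + 2), wlop_add_two ℓ,
      add_right_comm ℓ 2 1]
    module

end ShimuraLift

theorem shimura_lift_commutes_with_Tp2l_general
    (k N : ℕ) (hN4 : 4 ∣ N)
    (χ : DirichletCharacter ℂ N) (p : ℕ) [Fact p.Prime] (hpN : ¬ p ∣ N)
    (t : ℕ) (ht : Squarefree t)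
    (ℓ : ℕ) (hℓ : 2 ≤ ℓ) (a : ℕ → ℂ) (n : ℕ) :
    ShLift k N χ t (Vop k N χ p ℓ a) n
      = Wlop k N χ p ℓ (ShLift k N χ t a) n
        - χ (p : ZMod N) ^ 2 * (p : ℂ) ^ (k - 3)
            * Wlop k N χ p (ℓ - 2) (ShLift k N χ t a) n := by
  have hp2 : p ≠ 2 := by
    rintro rfl
    exact hpN ((dvd_mul_right 2 2).trans hN4)
  obtain ⟨ℓ, rfl⟩ := Nat.exists_eq_add_of_le' hℓ
  rw [Nat.add_sub_cancel, shLift_vop_add_two hp2 ht]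
  rfl

/-- for p ∤ N, ℓ ≥ 2, every a and every n ≥ 1,
    (Sh_t(V_ℓ a))(n) = (W_{p,ℓ}(Sh_t a))(n) − χ(p)²·p^{k−3}·(W_{p,ℓ−2}(Sh_t a))(n). -/
theorem shimura_lift_commutes_with_Tp2l
    (k N : ℕ) (hk3 : 3 ≤ k) (hk : Odd k) (hN : 0 < N) (hN4 : 4 ∣ N)
    (χ : DirichletCharacter ℂ N) (p : ℕ) [Fact p.Prime] (hpN : ¬ p ∣ N)
    (t : ℕ) (ht0 : 0 < t) (ht : Squarefree t)
    (ℓ : ℕ) (hℓ : 2 ≤ ℓ) (a : ℕ → ℂ) (n : ℕ) (hn : 0 < n) :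
    ShLift k N χ t (Vop k N χ p ℓ a) n
      = Wlop k N χ p ℓ (ShLift k N χ t a) n
        - χ (p : ZMod N) ^ 2 * (p : ℂ) ^ (k - 3)
            * Wlop k N χ p (ℓ - 2) (ShLift k N χ t a) n :=
  shimura_lift_commutes_with_Tp2l_general k N hN4 χ p hpN t ht ℓ hℓ a n
end
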